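/- Fix α with 0 < α < 1/2. Then lim_{t→∞} ∫_1^t s^{−3α} · exp(−∫_s^t u^{−2α} du) ds = 0. -/

import Mathlib

/-!
Write `F(s) = ∫_s^t u^{-2α} du`. Since `u^{-2α} ≥ u⁻¹` on `[1, ∞)`, we get
`F(s) ≥ log (t / s) ≥ 2α log (t / s)`, hence `s^{-α} e^{-F(s)/2} ≤ t^{-α}` and the integrand is at most
`t^{-α} · s^{-2α} e^{-F(s)/2}`. As `F' = -s^{-2α}`, the last function is the derivative of
`2 e^{-F(s)/2}`, so its integral over `[1, t]` is at most `2`, and the whole integral is at most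
`2 t^{-α} → 0`.
-/

open Real Filter MeasureTheory Set intervalIntegral
open scoped Interval

theorem integral_mul_exp_neg_mul_eq {F g : ℝ → ℝ} {a b c : ℝ} (hc : c ≠ 0)
    (hF : ∀ x ∈ [[a, b]], HasDerivAt F (-g x) x) (hg : IntervalIntegrable g volume a b) :
    ∫ x in a..b, g x * exp (-(c * F x)) = (exp (-(c * F b)) - exp (-(c * F a))) / c := by
  have hderiv : ∀ x ∈ [[a, b]],
      HasDerivAt (fun y => exp (-(c * F y)) / c) (g x * exp (-(c * F x))) x := by
    intro x hx
    have hexp : HasDerivAt (fun y => exp (-(c * F y))) (exp (-(c * F x)) * -(c * -g x)) x :=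
      ((hF x hx).const_mul c).neg.exp
    refine (hexp.div_const c).congr_deriv ?_
    field_simp
  rw [integral_eq_sub_of_hasDerivAt hderiv
    (hg.mul_continuousOn (HasDerivAt.continuousOn fun x hx => ((hF x hx).const_mul c).neg.exp))]
  ring

theorem hasDerivAt_integral_rpow_left {r s t : ℝ} (hs : 0 < s) (ht : 0 < t) :
    HasDerivAt (fun x => ∫ u in x..t, u ^ r) (-s ^ r) s := by
  have hcont : ContinuousOn (fun u : ℝ => u ^ r) (Ioi 0) :=
    continuousOn_id.rpow_const fun u hu => Or.inl (ne_of_gt hu)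
  exact integral_hasDerivAt_left (intervalIntegrable_rpow (Or.inr (notMem_uIcc_of_lt hs ht)))
    (hcont.stronglyMeasurableAtFilter isOpen_Ioi s hs) (hcont.continuousAt (Ioi_mem_nhds hs))

theorem log_div_le_integral_rpow_neg {q s t : ℝ} (hq : q ≤ 1) (hs : 1 ≤ s) (hst : s ≤ t) :
    log (t / s) ≤ ∫ u in s..t, u ^ (-q) := by
  have hs0 : 0 < s := zero_lt_one.trans_le hs
  have hzero : (0 : ℝ) ∉ [[s, t]] := notMem_uIcc_of_lt hs0 (hs0.trans_le hst)
  rw [← integral_inv hzero]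
  refine integral_mono_on hst ?_ (intervalIntegrable_rpow (Or.inr hzero)) fun u hu => ?_
  · simpa only [rpow_neg_one] using intervalIntegrable_rpow (r := -1) (Or.inr hzero)
  · rw [← rpow_neg_one]
    exact rpow_le_rpow_of_exponent_le (hs.trans hu.1) (by linarith)

theorem rpow_mul_exp_neg_le {α s t y : ℝ} (hs : 0 < s) (ht : 0 < t)
    (hy : 2 * α * log (t / s) ≤ y) :
    s ^ (-(3 * α)) * exp (-y) ≤ t ^ (-α) * (s ^ (-(2 * α)) * exp (-(1 / 2 * y))) := by
  rw [log_div ht.ne' hs.ne'] at hy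
  simp only [rpow_def_of_pos hs, rpow_def_of_pos ht, ← exp_add, exp_le_exp]
  nlinarith

theorem integral_rpow_mul_exp_neg_integral_le {α t : ℝ} (hα : α < 1 / 2) (ht : 1 ≤ t) :
    ∫ s in (1 : ℝ)..t, s ^ (-(3 * α)) * exp (-(∫ u in s..t, u ^ (-(2 * α))))
      ≤ 2 * t ^ (-α) := by
  set F : ℝ → ℝ := fun s => ∫ u in s..t, u ^ (-(2 * α))
  have ht0 : 0 < t := zero_lt_one.trans_le ht
  have hzero : (0 : ℝ) ∉ [[1, t]] := notMem_uIcc_of_lt one_pos ht0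
  have hF : ∀ s ∈ [[1, t]], HasDerivAt F (-s ^ (-(2 * α))) s := fun s hs =>
    hasDerivAt_integral_rpow_left (zero_lt_one.trans_le (uIcc_of_le ht ▸ hs).1) ht0
  have hFcont : ContinuousOn F [[1, t]] := HasDerivAt.continuousOn hF
  have hint : IntervalIntegrable (fun s : ℝ => s ^ (-(2 * α))) volume 1 t :=
    intervalIntegrable_rpow (Or.inr hzero)
  have hmajorant : ∫ s in (1 : ℝ)..t, s ^ (-(2 * α)) * exp (-(1 / 2 * F s)) ≤ 2 := by
    have hFt : F t = 0 := integral_same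
    rw [integral_mul_exp_neg_mul_eq (by norm_num) hF hint, hFt, mul_zero, neg_zero, exp_zero]
    linarith [exp_pos (-(1 / 2 * F 1))]
  have hpointwise : ∀ s ∈ Icc 1 t,
      s ^ (-(3 * α)) * exp (-F s) ≤ t ^ (-α) * (s ^ (-(2 * α)) * exp (-(1 / 2 * F s))) := by
    intro s hs
    have hs0 : 0 < s := zero_lt_one.trans_le hs.1
    refine rpow_mul_exp_neg_le hs0 ht0 ?_
    have hlog : 0 ≤ log (t / s) := log_nonneg ((one_le_div hs0).2 hs.2)
    calc 2 * α * log (t / s) ≤ log (t / s) := by nlinarith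
      _ ≤ F s := log_div_le_integral_rpow_neg (by linarith) hs.1 hs.2
  calc ∫ s in (1 : ℝ)..t, s ^ (-(3 * α)) * exp (-F s)
      ≤ ∫ s in (1 : ℝ)..t, t ^ (-α) * (s ^ (-(2 * α)) * exp (-(1 / 2 * F s))) :=
        integral_mono_on ht
          ((intervalIntegrable_rpow (Or.inr hzero)).mul_continuousOn (by fun_prop))
          ((hint.mul_continuousOn (by fun_prop)).const_mul _) hpointwise
    _ = t ^ (-α) * ∫ s in (1 : ℝ)..t, s ^ (-(2 * α)) * exp (-(1 / 2 * F s)) :=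
        integral_const_mul _ _
    _ ≤ t ^ (-α) * 2 := by gcongr
    _ = 2 * t ^ (-α) := mul_comm _ _

theorem tendsto_integral_decay {α : ℝ} (hα0 : 0 < α) (hα : α < 1 / 2) :
    Tendsto (fun t : ℝ =>
        ∫ s in (1 : ℝ)..t, s ^ (-(3 * α)) * Real.exp (-(∫ u in s..t, u ^ (-(2 * α)))))
      atTop (nhds 0) := by
  have hbound : Tendsto (fun t : ℝ => 2 * t ^ (-α)) atTop (nhds 0) := by
    simpa using (tendsto_rpow_neg_atTop hα0).const_mul (2 : ℝ)
  refine tendsto_of_tendsto_of_tendsto_of_le_of_le' tendsto_const_nhds hbound ?_ ?_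
  · filter_upwards [eventually_ge_atTop (1 : ℝ)] with t ht
    exact integral_nonneg ht fun s hs => by
      have := zero_le_one.trans hs.1
      positivity
  · filter_upwards [eventually_ge_atTop (1 : ℝ)] with t ht
    exact integral_rpow_mul_exp_neg_integral_le hα ht
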